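/- Let G be a digraph with a piece decomposition as above and reachability-preserving certificates X_P, and let X = ⋃_P X_P. Let S* be an SCC of G not contained in the vertex set of any single piece. Then S* ∩ ∂R ≠ ∅, and there is an SCC B of X with B ∩ ∂R = S* ∩ ∂R; moreover for every piece P with S* ∩ V(P) ≠ ∅ we have S* ∩ ∂P ≠ ∅. -/

import Mathlib

/-!
Call a vertex a portal if it lies in several pieces. A path in a union of pieces can only change
pieces at portals, so between portals it is a chain of hops, each running inside one piece from
a portal of that piece to another. This holds in `G` (portals `∂P`) and in `X` (portals `ι(∂P)`,
since distinct certificates share only images of boundary vertices), and the certificates make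
the two hop relations coincide. Hence `ι` preserves reachability between vertices of `∂R`, which
transports the strong component of `S` restricted to `∂R` to a strong component of `X`. Finally,
a strong component meeting a piece without lying inside it must leave the piece through its
boundary.
-/

open Relation

section Portals

variable {α β κ : Type*} {R : κ → α → α → Prop} {A : κ → Set α}

def pieceBoundary (A : κ → Set α) (i : κ) : Set α :=
  {v | v ∈ A i ∧ ∃ j, j ≠ i ∧ v ∈ A j}

theorem mem_pieceBoundary_of_mem_iUnion {v : α} {i : κ} (hv : v ∈ ⋃ j, pieceBoundary A j)
    (hvi : v ∈ A i) : v ∈ pieceBoundary A i := by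
  obtain ⟨j, hvj, k, hkj, hvk⟩ := Set.mem_iUnion.mp hv
  by_cases hji : j = i
  · exact hji ▸ ⟨hvj, k, hkj, hvk⟩
  · exact ⟨hvi, j, hji, hvj⟩

theorem exists_mem_pieceBoundary_of_reflTransGen
    (hedge : ∀ k a c, R k a c → a ∈ A k ∧ c ∈ A k) {u v : α} {i : κ}
    (huv : ReflTransGen (fun a c => ∃ k, R k a c) u v) (hu : u ∈ A i) (hv : v ∉ A i) :
    ∃ b ∈ pieceBoundary A i, ReflTransGen (fun a c => ∃ k, R k a c) u b ∧
      ReflTransGen (fun a c => ∃ k, R k a c) b v := by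
  induction huv using ReflTransGen.head_induction_on generalizing i with
  | refl => exact absurd hu hv
  | @head a c hac hcv ih =>
    obtain ⟨k, hk⟩ := hac
    by_cases hki : k = i
    · subst hki
      obtain ⟨b, hb, hcb, hbv⟩ := ih (hedge k a c hk).2 hv
      exact ⟨b, hb, hcb.head ⟨k, hk⟩, hbv⟩
    · exact ⟨a, ⟨hu, k, hki, (hedge k a c hk).1⟩, .refl, hcv.head ⟨k, hk⟩⟩

variable {T : κ → Set β} {f : β → α}

/-- The portals of piece `k` are the images under `f` of `T k`; a hop from `s` to `t` runs inside
a single piece having both as portals. -/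
def portalHop (R : κ → α → α → Prop) (T : κ → Set β) (f : β → α) (s t : β) : Prop :=
  ∃ k, s ∈ T k ∧ t ∈ T k ∧ ReflTransGen (R k) (f s) (f t)

variable (hf : f.Injective) (hedge : ∀ k a c, R k a c → a ∈ A k ∧ c ∈ A k)
  (hportal : ∀ k, ∀ u ∈ ⋃ j, T j, f u ∈ A k → u ∈ T k)
  (hshared : ∀ i k, i ≠ k → ∀ a ∈ A i, a ∈ A k → ∃ u ∈ ⋃ j, T j, f u = a)
include hf hedge hportal hshared

theorem exists_portal_reflTransGen_portalHop {x : α} {v : β} {i : κ}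
    (hxv : ReflTransGen (fun a c => ∃ k, R k a c) x (f v)) (hv : v ∈ ⋃ j, T j)
    (hx : x ∈ A i ∨ ∃ s ∈ T i, f s = x) :
    ∃ t ∈ T i, ReflTransGen (R i) x (f t) ∧ ReflTransGen (portalHop R T f) t v := by
  induction hxv using ReflTransGen.head_induction_on generalizing i with
  | refl =>
    refine ⟨v, ?_, .refl, .refl⟩
    rcases hx with hx | ⟨s, hs, hsv⟩
    · exact hportal i v hv hx
    · exact hf hsv ▸ hs
  | @head x c hxc hcv ih =>
    obtain ⟨k, hk⟩ := hxc
    obtain ⟨t, ht, hct, htv⟩ := ih (Or.inl (hedge k x c hk).2)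
    by_cases hki : k = i
    · subst hki
      exact ⟨t, ht, hct.head hk, htv⟩
    have hxk : x ∈ A k := (hedge k x c hk).1
    obtain ⟨s, hs, rfl⟩ : ∃ s ∈ T i, f s = x := by
      rcases hx with hx | hx
      · obtain ⟨u, hu, rfl⟩ := hshared i k (Ne.symm hki) x hx hxk
        exact ⟨u, hportal i u hu hx, rfl⟩
      · exact hx
    have hsk : s ∈ T k := hportal k s (Set.mem_iUnion.mpr ⟨i, hs⟩) hxk
    exact ⟨s, hs, .refl, htv.head ⟨k, hsk, ht, hct.head hk⟩⟩

theorem reflTransGen_iff_reflTransGen_portalHop {s t : β} (hs : s ∈ ⋃ j, T j)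
    (ht : t ∈ ⋃ j, T j) :
    ReflTransGen (fun a c => ∃ k, R k a c) (f s) (f t) ↔ ReflTransGen (portalHop R T f) s t := by
  refine ⟨fun hst => ?_, fun hst => ?_⟩
  · obtain ⟨i, hsi⟩ := Set.mem_iUnion.mp hs
    obtain ⟨t', ht', hst', ht't⟩ :=
      exists_portal_reflTransGen_portalHop hf hedge hportal hshared hst ht (Or.inr ⟨s, hsi, rfl⟩)
    exact ht't.head ⟨i, hsi, ht', hst'⟩
  · refine ReflTransGen.lift' f (fun a b ⟨k, _, _, hab⟩ => ?_) s t hst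
    exact ReflTransGen.mono (fun x y hxy => ⟨k, hxy⟩) _ _ hab

end Portals

theorem reflTransGen_iff_reflTransGen_of_certificates {V W I : Type*} {ι : V → W}
    (hι : ι.Injective) {EP : I → V → V → Prop} {VP : I → Set V} {X : I → W → W → Prop}
    {VX : I → Set W} (hedgeG : ∀ k a c, EP k a c → a ∈ VP k ∧ c ∈ VP k)
    (hedgeX : ∀ k a c, X k a c → a ∈ VX k ∧ c ∈ VX k)
    (hcert : ∀ i, ∀ u ∈ pieceBoundary VP i, ∀ v ∈ pieceBoundary VP i,
      ReflTransGen (EP i) u v ↔ ReflTransGen (X i) (ι u) (ι v))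
    (himg : ∀ i u, ι u ∈ VX i → u ∈ pieceBoundary VP i)
    (hpriv : ∀ i j, i ≠ j → ∀ w, w ∈ VX i → w ∈ VX j → ∃ u, w = ι u)
    {u v : V} (hu : u ∈ ⋃ i, pieceBoundary VP i) (hv : v ∈ ⋃ i, pieceBoundary VP i) :
    ReflTransGen (fun a c => ∃ k, EP k a c) u v ↔
      ReflTransGen (fun a c => ∃ k, X k a c) (ι u) (ι v) := by
  have hhop : portalHop EP (pieceBoundary VP) id = portalHop X (pieceBoundary VP) ι :=
    funext₂ fun s t => propext <| exists_congr fun k => and_congr_right fun hs =>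
      and_congr_right fun ht => hcert k s hs t ht
  have hG := reflTransGen_iff_reflTransGen_portalHop Function.injective_id hedgeG
    (fun k u hu hk => mem_pieceBoundary_of_mem_iUnion hu hk)
    (fun i k hik a hi hk => ⟨a, Set.mem_iUnion.mpr ⟨i, hi, k, hik.symm, hk⟩, rfl⟩) hu hv
  have hX := reflTransGen_iff_reflTransGen_portalHop hι hedgeX (fun k u _ hk => himg k u hk)
    (fun i k hik a hi hk => by
      obtain ⟨u, rfl⟩ := hpriv i k hik a hi hk
      exact ⟨u, Set.mem_iUnion.mpr ⟨i, himg i u hi⟩, rfl⟩) hu hv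
  rw [hhop] at hG
  exact hG.trans hX.symm

section StrongComponent

variable {α β : Type*}

def strongComponent (r : α → α → Prop) (a : α) : Set α :=
  {b | ReflTransGen r a b ∧ ReflTransGen r b a}

theorem strongComponent_eq_of_mem {r : α → α → Prop} {a b : α} (hb : b ∈ strongComponent r a) :
    strongComponent r b = strongComponent r a := by
  ext c
  exact ⟨fun ⟨hbc, hcb⟩ => ⟨hb.1.trans hbc, hcb.trans hb.2⟩,
    fun ⟨hac, hca⟩ => ⟨hb.2.trans hac, hca.trans hb.1⟩⟩

theorem strongComponent_inter_image {r : α → α → Prop} {q : β → β → Prop} {f : α → β}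
    {T : Set α} (hreach : ∀ u ∈ T, ∀ v ∈ T, ReflTransGen r u v ↔ ReflTransGen q (f u) (f v))
    {p : α} (hp : p ∈ T) :
    strongComponent q (f p) ∩ f '' T = f '' (strongComponent r p ∩ T) := by
  ext w
  constructor
  · rintro ⟨⟨hpw, hwp⟩, u, hu, rfl⟩
    exact ⟨u, ⟨⟨(hreach p hp u hu).mpr hpw, (hreach u hu p hp).mpr hwp⟩, hu⟩, rfl⟩
  · rintro ⟨u, ⟨⟨hpu, hup⟩, hu⟩, rfl⟩
    exact ⟨⟨(hreach p hp u hu).mp hpu, (hreach u hu p hp).mp hup⟩, u, hu, rfl⟩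

theorem strongComponent_inter_pieceBoundary_nonempty {κ : Type*} {R : κ → α → α → Prop}
    {A : κ → Set α} (hedge : ∀ k a c, R k a c → a ∈ A k ∧ c ∈ A k) {r : α} {i : κ}
    (hmeet : (strongComponent (fun a c => ∃ k, R k a c) r ∩ A i).Nonempty)
    (hout : ¬ strongComponent (fun a c => ∃ k, R k a c) r ⊆ A i) :
    (strongComponent (fun a c => ∃ k, R k a c) r ∩ pieceBoundary A i).Nonempty := by
  obtain ⟨u, ⟨hru, hur⟩, hu⟩ := hmeet
  obtain ⟨v, ⟨hrv, hvr⟩, hv⟩ := Set.not_subset.mp hout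
  obtain ⟨b, hb, hub, hbv⟩ := exists_mem_pieceBoundary_of_reflTransGen hedge (hur.trans hrv) hu hv
  exact ⟨b, ⟨hru.trans hub, hbv.trans hvr⟩, hb⟩

end StrongComponent

/-- With a piece decomposition of `G` and reachability-preserving
certificates `X i` (union `X`), any SCC `S` of `G` not contained in a single
piece intersects the total boundary `∂R`; there is an SCC `B` of `X` with
`B ∩ ι(∂R) = ι(S ∩ ∂R)`; and every piece meeting `S` meets `S` at its boundary. -/
theorem stmt17 {V W I : Type*} (ι : V → W) (hι : Function.Injective ι)
    (E : V → V → Prop) (EP : I → V → V → Prop)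
    (hcover : ∀ u v, E u v ↔ ∃ i, EP i u v)
    (VP : I → Set V) (hVP : ∀ i, VP i = {v | ∃ u, EP i v u ∨ EP i u v})
    (hvert : ∀ v : V, ∃ i, v ∈ VP i)
    (bP : I → Set V) (hbP : ∀ i, bP i = {v | v ∈ VP i ∧ ∃ j, j ≠ i ∧ v ∈ VP j})
    (X : I → W → W → Prop)
    (VX : I → Set W) (hVX : ∀ i, VX i = {w | ∃ w', X i w w' ∨ X i w' w})
    (hcert : ∀ i, ∀ u ∈ bP i, ∀ v ∈ bP i,
      (Relation.ReflTransGen (EP i) u v ↔ Relation.ReflTransGen (X i) (ι u) (ι v)))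
    (himg : ∀ i u, ι u ∈ VX i → u ∈ bP i)
    (hpriv : ∀ i j, i ≠ j → ∀ w, w ∈ VX i → w ∈ VX j → ∃ u, w = ι u)
    (S : Set V)
    (hS : ∃ r, S = {w | Relation.ReflTransGen E r w ∧ Relation.ReflTransGen E w r})
    (hbig : ∀ i, ¬ S ⊆ VP i) :
    (S ∩ ⋃ i, bP i).Nonempty ∧
    (∃ B : Set W,
      (∃ r, B = {w | Relation.ReflTransGen (fun a c => ∃ i, X i a c) r w ∧
                     Relation.ReflTransGen (fun a c => ∃ i, X i a c) w r}) ∧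
      B ∩ (ι '' ⋃ i, bP i) = ι '' (S ∩ ⋃ i, bP i)) ∧
    (∀ i, (S ∩ VP i).Nonempty → (S ∩ bP i).Nonempty) := by
  obtain rfl : E = fun u v => ∃ i, EP i u v := funext₂ fun u v => propext (hcover u v)
  obtain rfl : bP = pieceBoundary VP := funext hbP
  obtain ⟨r, rfl⟩ := hS
  have hedgeG : ∀ k a c, EP k a c → a ∈ VP k ∧ c ∈ VP k := fun k a c h => by
    rw [hVP]; exact ⟨⟨c, .inl h⟩, a, .inr h⟩
  have hedgeX : ∀ k a c, X k a c → a ∈ VX k ∧ c ∈ VX k := fun k a c h => by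
    rw [hVX]; exact ⟨⟨c, .inl h⟩, a, .inr h⟩
  have hboundary : ∀ i, (strongComponent _ r ∩ VP i).Nonempty →
      (strongComponent _ r ∩ pieceBoundary VP i).Nonempty := fun i hmeet =>
    strongComponent_inter_pieceBoundary_nonempty hedgeG hmeet (hbig i)
  obtain ⟨i, hri⟩ := hvert r
  obtain ⟨p, hpS, hp⟩ := hboundary i ⟨r, ⟨.refl, .refl⟩, hri⟩
  have hpB : p ∈ ⋃ i, pieceBoundary VP i := Set.mem_iUnion.mpr ⟨i, hp⟩
  have hcomponent := strongComponent_inter_image (fun u hu v hv =>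
    reflTransGen_iff_reflTransGen_of_certificates hι hedgeG hedgeX hcert himg hpriv hu hv) hpB
  rw [strongComponent_eq_of_mem hpS] at hcomponent
  exact ⟨⟨p, hpS, hpB⟩, ⟨_, ⟨ι p, rfl⟩, hcomponent⟩, hboundary⟩
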